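/- arXiv:2106.14569 — 4 statements merged into one kernel-verified Lean document; each statement's English description precedes it below -/
import Mathlib

section
/- Sum rule for outer limits: if α is an M×A-outer limit of F at a and β is an M×B-outer limit of G at a (A = N(α), B = N(β)), then α + β is an M×(A+B)-outer limit of F + G at a, where (F+G)(x) = F(x) + G(x) is the Minkowski sum. -/
open Pointwise

/-- A neutrix: an additive convex subgroup of ℝ. -/
def IsNeutrix (A : Set ℝ) : Prop :=
  (0:ℝ) ∈ A ∧ (∀ x ∈ A, ∀ y ∈ A, x + y ∈ A) ∧ (∀ x ∈ A, -x ∈ A) ∧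
    (∀ x ∈ A, ∀ z ∈ A, ∀ y : ℝ, x ≤ y → y ≤ z → y ∈ A)

/-- An external number: a set of the form a + A with A a neutrix. -/
def IsExternal (α : Set ℝ) : Prop := ∃ a : ℝ, ∃ A : Set ℝ, IsNeutrix A ∧ α = {a} + A
/-- α is an M×N-outer limit of F at a on X. -/
def OuterLimit (F : ℝ → Set ℝ) (X : Set ℝ) (a : ℝ) (M N : Set ℝ) (α : Set ℝ) : Prop :=
  ∀ ε : ℝ, (∀ n ∈ N, n < ε) →
    ∃ δ : ℝ, (∀ m ∈ M, m < δ) ∧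
      ∀ x ∈ X, (∀ m ∈ M, m < |x - a|) → |x - a| < δ →
        ∀ z ∈ F x - α, |z| < ε

/-- α is an M×N-inner limit of F at a on X. -/
def InnerLimit (F : ℝ → Set ℝ) (X : Set ℝ) (a : ℝ) (M N : Set ℝ) (α : Set ℝ) : Prop :=
  ∀ ε : ℝ, (∀ n ∈ N, n < ε) →
    ∃ δ : ℝ, (∀ m ∈ M, m < δ) ∧
      ∀ x ∈ X, 0 < |x - a| → |x - a| < δ →
        ∀ z ∈ F x - α, |z| < ε

theorem outer_limit_add (F G : ℝ → Set ℝ) (X : Set ℝ) (a : ℝ) (M A B : Set ℝ) (s t : ℝ)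
    (hM : IsNeutrix M) (hA : IsNeutrix A) (hB : IsNeutrix B)
    (hF : OuterLimit F X a M A ({s} + A))
    (hG : OuterLimit G X a M B ({t} + B)) :
    OuterLimit (fun x => F x + G x) X a M (A + B) (({s} + A) + ({t} + B)) := by
  intro ε hε
  have hhalf : ∀ n ∈ A + B, n < ε / 2 := by
    intro n hn
    by_contra h
    push_neg at h
    have hnn : n + n ∈ A + B := by
      obtain ⟨a1, ha1, b1, hb1, rfl⟩ := hn
      exact ⟨a1 + a1, hA.2.1 _ ha1 _ ha1, b1 + b1, hB.2.1 _ hb1 _ hb1, by ring⟩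
    have := hε _ hnn
    linarith
  have hεA : ∀ n ∈ A, n < ε / 2 := fun n hn => hhalf n (by simpa using Set.add_mem_add hn hB.1)
  have hεB : ∀ n ∈ B, n < ε / 2 := fun n hn => hhalf n (by simpa using Set.add_mem_add hA.1 hn)
  obtain ⟨δ1, hδ1M, h1⟩ := hF (ε / 2) hεA
  obtain ⟨δ2, hδ2M, h2⟩ := hG (ε / 2) hεB
  refine ⟨min δ1 δ2, fun m hm => lt_min (hδ1M m hm) (hδ2M m hm), ?_⟩
  intro x hx hxm hxd z hz
  obtain ⟨u, hu, v, hv, rfl⟩ := hz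
  obtain ⟨f, hf, g, hg, rfl⟩ := hu
  obtain ⟨sa, hsa, tb, htb, rfl⟩ := hv
  have e1 : |f - sa| < ε / 2 :=
    h1 x hx hxm (hxd.trans_le (min_le_left _ _)) _ (Set.sub_mem_sub hf hsa)
  have e2 : |g - tb| < ε / 2 :=
    h2 x hx hxm (hxd.trans_le (min_le_right _ _)) _ (Set.sub_mem_sub hg htb)
  have heq : f + g - (sa + tb) = (f - sa) + (g - tb) := by ring
  show |f + g - (sa + tb)| < ε
  rw [heq]
  calc |(f - sa) + (g - tb)| ≤ |f - sa| + |g - tb| := abs_add_le _ _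
    _ < ε := by linarith
end

section
/- Reciprocal rule for outer limits: let F be a flexible function, zeroless on an outer M-neighborhood of a, with M×A-outer limit α = s + A at a, α zeroless. Then 1/α = 1/s + A/s² is an M×(A/s²)-outer limit of the flexible function x ↦ 1/F(x) at a. -/
open Pointwise

theorem outer_limit_inv (F : ℝ → Set ℝ) (X : Set ℝ) (a : ℝ) (M A : Set ℝ) (s : ℝ)
    (hM : IsNeutrix M) (hA : IsNeutrix A)
    (hext : ∀ x ∈ X, IsExternal (F x))
    (hzα : (0:ℝ) ∉ ({s} + A : Set ℝ))
    (hzF : ∃ δ₀ : ℝ, (∀ m ∈ M, m < δ₀) ∧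
      ∀ x ∈ X, (∀ m ∈ M, m < |x - a|) → |x - a| < δ₀ → (0:ℝ) ∉ F x)
    (hlim : OuterLimit F X a M A ({s} + A)) :
    OuterLimit (fun x => (fun t : ℝ => t⁻¹) '' F x) X a M ((s ^ 2)⁻¹ • A)
      ({s⁻¹} + (s ^ 2)⁻¹ • A) := by
  obtain ⟨h0A, haddA, hnegA, hconvA⟩ := hA
  -- s ≠ 0
  have hs : s ≠ 0 := by
    intro h
    apply hzα
    have : (0:ℝ) = s + 0 := by rw [h]; ring
    rw [this]
    exact Set.add_mem_add rfl h0A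
  have hs2 : (0:ℝ) < s ^ 2 := by positivity
  -- all elements of A are < |s| in abs value
  have habs : ∀ b ∈ A, |b| < |s| := by
    intro b hb
    by_contra h
    push_neg at h
    have h1 : |b| ∈ A := by
      rcases abs_choice b with h' | h'
      · rw [h']; exact hb
      · rw [h']; exact hnegA b hb
    have h2 : -|b| ∈ A := hnegA _ h1
    have hsb : |(-s)| ≤ |b| := by rwa [abs_neg]
    obtain ⟨hl, hr⟩ := abs_le.mp hsb
    have hmem : -s ∈ A := hconvA _ h2 _ h1 (-s) hl hr
    apply hzα
    have : (0:ℝ) = s + (-s) := by ring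
    rw [this]
    exact Set.add_mem_add rfl hmem
  intro ε hε
  have hεA : ∀ b ∈ A, b / s ^ 2 < ε := by
    intro b hb
    have : (s ^ 2)⁻¹ • b ∈ (s ^ 2)⁻¹ • A := Set.smul_mem_smul_set hb
    have := hε _ this
    simpa [smul_eq_mul, div_eq_inv_mul] using this
  have hε0 : 0 < ε := by
    have := hεA 0 h0A
    simpa using this
  -- bound: |b| < ε * s^2 / 4 for b ∈ A
  have hbound : ∀ b ∈ A, |b| < ε * s ^ 2 / 4 := by
    intro b hb
    have h4 : b + b + (b + b) ∈ A := haddA _ (haddA _ hb _ hb) _ (haddA _ hb _ hb)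
    have h4n : -(b + b + (b + b)) ∈ A := hnegA _ h4
    have p1 := hεA _ h4
    have p2 := hεA _ h4n
    rw [div_lt_iff₀ hs2] at p1 p2
    rcases abs_cases b with ⟨h', _⟩ | ⟨h', _⟩ <;> rw [h'] <;> nlinarith
  -- bound: |b| < |s| / 2 for b ∈ A
  have hbound2 : ∀ b ∈ A, |b| < |s| / 2 := by
    intro b hb
    have h2 : b + b ∈ A := haddA _ hb _ hb
    have := habs _ h2
    rcases abs_cases b with ⟨h', _⟩ | ⟨h', _⟩ <;> rw [h'] <;>
      rcases abs_cases (b + b) with ⟨h'', _⟩ | ⟨h'', _⟩ <;> rw [h''] at this <;> linarith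
  set ε' : ℝ := min (|s| / 2) (ε * s ^ 2 / 4) with hε'def
  have hε'A : ∀ n ∈ A, n < ε' := by
    intro n hn
    exact lt_min (lt_of_le_of_lt (le_abs_self n) (hbound2 n hn))
      (lt_of_le_of_lt (le_abs_self n) (hbound n hn))
  obtain ⟨δ, hδM, hδ⟩ := hlim ε' hε'A
  refine ⟨δ, hδM, ?_⟩
  intro x hx hxM hxδ z hz
  rw [Set.mem_sub] at hz
  obtain ⟨u, hu, v, hv, hzeq⟩ := hz
  obtain ⟨t, ht, rfl⟩ := hu
  rw [Set.mem_add] at hv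
  obtain ⟨p, hp, q, hq, rfl⟩ := hv
  rw [Set.mem_singleton_iff] at hp
  subst hp
  obtain ⟨b, hb, rfl⟩ := hq
  -- key: |t - s| < ε'
  have hts : |t - s| < ε' := by
    have hsmem : s ∈ ({s} + A : Set ℝ) := by
      rw [Set.mem_add]; exact ⟨s, rfl, 0, h0A, by ring⟩
    exact hδ x hx hxM hxδ (t - s) (Set.sub_mem_sub ht hsmem)
  have hε'1 : ε' ≤ |s| / 2 := min_le_left _ _
  have hε'2 : ε' ≤ ε * s ^ 2 / 4 := min_le_right _ _
  have hslb : |s| / 2 < |t| := by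
    have h1 : |s| - |t| ≤ |t - s| := by
      have := abs_sub_abs_le_abs_sub s t
      rwa [abs_sub_comm] at this
    linarith
  have hspos : 0 < |s| := abs_pos.mpr hs
  have htpos : 0 < |t| := by linarith
  have htne : t ≠ 0 := abs_pos.mp htpos
  -- bound on |t⁻¹ - s⁻¹|
  have hinv : |t⁻¹ - s⁻¹| < ε / 2 := by
    rw [inv_sub_inv htne hs, abs_div, abs_mul]
    rw [div_lt_iff₀ (by positivity)]
    have h1 : |s - t| < ε * s ^ 2 / 4 := by
      rw [abs_sub_comm]; linarith
    have h2 : s ^ 2 / 2 < |t| * |s| := by nlinarith [sq_abs s]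
    nlinarith
  have hbb : |(s ^ 2)⁻¹ • b| < ε / 4 := by
    have := hbound b hb
    rw [smul_eq_mul, abs_mul, abs_inv, abs_of_pos hs2]
    rw [inv_mul_eq_div, div_lt_iff₀ hs2]
    nlinarith
  have : |t⁻¹ - (s⁻¹ + (s ^ 2)⁻¹ • b)| < ε := by
    have heq : t⁻¹ - (s⁻¹ + (s ^ 2)⁻¹ • b) = (t⁻¹ - s⁻¹) - (s ^ 2)⁻¹ • b := by simp only [smul_eq_mul]; ring
    rw [heq]
    calc |(t⁻¹ - s⁻¹) - (s ^ 2)⁻¹ • b| ≤ |t⁻¹ - s⁻¹| + |(s ^ 2)⁻¹ • b| := abs_sub _ _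
      _ < ε := by linarith
  subst hzeq; simpa using this
end

section
/- Chain rule for outer limits (composition): let φ : X → ℝ, with M-outer limit b + N of φ at a, such that φ(x) ∉ b + N on an outer M-neighborhood U of a. Let G be a flexible function on φ(X) with N×C-outer limit γ = c + C at b. Then γ is an M×C-outer limit of G ∘ φ at a. -/
open Pointwise

theorem outer_limit_comp (X : Set ℝ) (φ : ℝ → ℝ) (G : ℝ → Set ℝ) (a b c : ℝ)
    (M N C : Set ℝ)
    (hM : IsNeutrix M) (hN : IsNeutrix N) (hC : IsNeutrix C)
    (hφ : OuterLimit (fun x => {φ x}) X a M N ({b} + N))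
    (hout : ∃ δU : ℝ, (∀ m ∈ M, m < δU) ∧
      ∀ x ∈ X, (∀ m ∈ M, m < |x - a|) → |x - a| < δU → φ x ∉ ({b} + N : Set ℝ))
    (hG : OuterLimit G (φ '' X) b N C ({c} + C)) :
    OuterLimit (fun x => G (φ x)) X a M C ({c} + C) := by
  intro η hη
  obtain ⟨ε, hε, hGε⟩ := hG η hη
  obtain ⟨δ1, hδ1, hφ1⟩ := hφ ε hε
  obtain ⟨δU, hδU, hU⟩ := hout
  refine ⟨min δ1 δU, fun m hm => lt_min (hδ1 m hm) (hδU m hm), ?_⟩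
  intro x hx hxa hxδ z hz
  have h1 : |x - a| < δ1 := lt_of_lt_of_le hxδ (min_le_left _ _)
  have h2 : |x - a| < δU := lt_of_lt_of_le hxδ (min_le_right _ _)
  have hφb : |φ x - b| < ε := by
    have hmem : φ x - (b + 0) ∈ ({φ x} : Set ℝ) - ({b} + N) :=
      Set.sub_mem_sub rfl (Set.add_mem_add rfl hN.1)
    simpa using hφ1 x hx hxa h1 _ hmem
  have hnot : φ x ∉ ({b} + N : Set ℝ) := hU x hx hxa h2
  have hNlt : ∀ n ∈ N, n < |φ x - b| := by
    intro n hn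
    by_contra h
    push_neg at h
    have hneg : -n ∈ N := hN.2.2.1 n hn
    have : φ x - b ∈ N := hN.2.2.2 (-n) hneg n hn _ (neg_le_of_abs_le h) (le_of_abs_le h)
    exact hnot ⟨b, rfl, φ x - b, this, by ring⟩
  exact hGε (φ x) ⟨x, hx, rfl⟩ hNlt hφb z hz
end

section
/- Product of functions tending to neutrices: let A = pI and B = qJ be neutrices with I, J idempotent (II = I, JJ = J) and p, q > 0. If A is an M×A-outer limit of F at a and B is an M×B-outer limit of G at a, then qA + pB contains an M×(qA+pB)-outer limit of FG at a; concretely, ∀ε > qA + pB ∃δ > M such that for M < |x−a| < δ, every element of F(x)G(x) has absolute value < ε. -/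
open Pointwise

theorem outer_limit_mul_neutricial (F G : ℝ → Set ℝ) (X : Set ℝ) (a : ℝ)
    (M I J : Set ℝ) (p q : ℝ)
    (hM : IsNeutrix M) (hI : IsNeutrix I) (hJ : IsNeutrix J)
    (hIid : I * I = I) (hJid : J * J = J) (hp : 0 < p) (hq : 0 < q)
    (hF : ∀ ε : ℝ, (∀ n ∈ (p • I : Set ℝ), n < ε) →
      ∃ δ : ℝ, (∀ m ∈ M, m < δ) ∧
        ∀ x ∈ X, (∀ m ∈ M, m < |x - a|) → |x - a| < δ → ∀ z ∈ F x, |z| < ε)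
    (hG : ∀ ε : ℝ, (∀ n ∈ (q • J : Set ℝ), n < ε) →
      ∃ δ : ℝ, (∀ m ∈ M, m < δ) ∧
        ∀ x ∈ X, (∀ m ∈ M, m < |x - a|) → |x - a| < δ → ∀ z ∈ G x, |z| < ε) :
    ∀ ε : ℝ, (∀ n ∈ (q • (p • I) + p • (q • J) : Set ℝ), n < ε) →
      ∃ δ : ℝ, (∀ m ∈ M, m < δ) ∧
        ∀ x ∈ X, (∀ m ∈ M, m < |x - a|) → |x - a| < δ →
          ∀ z ∈ F x * G x, |z| < ε := by
  intro ε hε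
  have h0I : (0:ℝ) ∈ I := hI.1
  have h0J : (0:ℝ) ∈ J := hJ.1
  have h0pI : (0:ℝ) ∈ (q • (p • I) : Set ℝ) := ⟨0, ⟨0, h0I, by simp⟩, by simp⟩
  have h0qJ : (0:ℝ) ∈ (p • (q • J) : Set ℝ) := ⟨0, ⟨0, h0J, by simp⟩, by simp⟩
  have hεpos : 0 < ε := by
    have := hε (0 + 0) (Set.add_mem_add h0pI h0qJ)
    simpa using this
  set ε₁ := Real.sqrt (p * ε / q) with hε₁
  set ε₂ := Real.sqrt (q * ε / p) with hε₂
  have hε₁sq : ε₁ * ε₁ = p * ε / q := Real.mul_self_sqrt (by positivity)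
  have hε₂sq : ε₂ * ε₂ = q * ε / p := Real.mul_self_sqrt (by positivity)
  have hεmul : ε₁ * ε₂ = ε := by
    rw [hε₁, hε₂, ← Real.sqrt_mul (by positivity)]
    rw [show (p * ε / q) * (q * ε / p) = ε * ε by field_simp]
    exact Real.sqrt_mul_self hεpos.le
  have keyI : ∀ n ∈ (p • I : Set ℝ), n < ε₁ := by
    intro n hn
    by_contra h
    push_neg at h
    obtain ⟨i, hi, rfl⟩ := hn
    simp only [smul_eq_mul] at h ⊢
    have hii : i * i ∈ I := by rw [← hIid]; exact Set.mul_mem_mul hi hi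
    have hmem : q * (p * (i * i)) ∈ (q • (p • I) : Set ℝ) :=
      ⟨p * (i * i), ⟨i * i, hii, rfl⟩, rfl⟩
    have hlt := hε (q * (p * (i * i)) + 0) (Set.add_mem_add hmem h0qJ)
    have hs := Real.sqrt_nonneg (p * ε / q)
    rw [← hε₁] at hs
    have h2 : p * ε / q ≤ (p * i) * (p * i) := hε₁sq ▸ mul_self_le_mul_self hs h
    rw [div_le_iff₀ hq] at h2
    nlinarith [h2, hlt, hp, hq]
  have keyJ : ∀ n ∈ (q • J : Set ℝ), n < ε₂ := by
    intro n hn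
    by_contra h
    push_neg at h
    obtain ⟨j, hj, rfl⟩ := hn
    simp only [smul_eq_mul] at h ⊢
    have hjj : j * j ∈ J := by rw [← hJid]; exact Set.mul_mem_mul hj hj
    have hmem : p * (q * (j * j)) ∈ (p • (q • J) : Set ℝ) :=
      ⟨q * (j * j), ⟨j * j, hjj, rfl⟩, rfl⟩
    have hlt := hε (0 + p * (q * (j * j))) (Set.add_mem_add h0pI hmem)
    have hs := Real.sqrt_nonneg (q * ε / p)
    rw [← hε₂] at hs
    have h2 : q * ε / p ≤ (q * j) * (q * j) := hε₂sq ▸ mul_self_le_mul_self hs h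
    rw [div_le_iff₀ hp] at h2
    nlinarith [h2, hlt, hp, hq]
  obtain ⟨δ₁, hδ₁M, hδ₁⟩ := hF ε₁ keyI
  obtain ⟨δ₂, hδ₂M, hδ₂⟩ := hG ε₂ keyJ
  refine ⟨min δ₁ δ₂, fun m hm => lt_min (hδ₁M m hm) (hδ₂M m hm), ?_⟩
  intro x hx hlow hhi z hz
  obtain ⟨f, hf, g, hg, rfl⟩ := hz
  have h1 := hδ₁ x hx hlow (hhi.trans_le (min_le_left _ _)) f hf
  have h2 := hδ₂ x hx hlow (hhi.trans_le (min_le_right _ _)) g hg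
  calc |f * g| = |f| * |g| := abs_mul f g
    _ < ε₁ * ε₂ := mul_lt_mul'' h1 h2 (abs_nonneg f) (abs_nonneg g)
    _ = ε := hεmul
end
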